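/- arXiv:cs/0505032 — 3 statements merged into one kernel-verified Lean document; each statement's English description precedes it below -/
import Mathlib

section
/- Let U, X, Y1, Y2, Û be discrete random variables on finite alphabets whose joint distribution factors as p(u,x) p(y1,y2|x) p(û|y2). If H(Û | Y1) = H(Û | Y2), then I(U; Û | Y1) = 0. -/
/-!
Both `I(U;Û|Y1)` and `I(Û;Y2|U,Y1)` are nonnegative (by `log x ≤ x - 1`). Since `Û` depends on
the other variables only through `Y2`, the chain rule for the channel `m` gives
`H(Û|U,Y1,Y2) = H(Û|Y2)`, hence `H(Û|U,Y1) = H(Û|Y2) + I(Û;Y2|U,Y1) ≥ H(Û|Y2) = H(Û|Y1)`.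
So `I(U;Û|Y1) = H(Û|Y1) - H(Û|U,Y1) ≤ 0`.
-/

/-- Shannon entropy (base 2). -/
noncomputable def ent {α : Type*} [Fintype α] (q : α → ℝ) : ℝ :=
  - ∑ a, q a * Real.logb 2 (q a)

open Finset Real

lemma ent_eq_sum_negMulLog_div {α : Type*} [Fintype α] (q : α → ℝ) :
    ent q = (∑ a, negMulLog (q a)) / log 2 := by
  simp only [ent, negMulLog, logb, neg_mul, sum_neg_distrib, neg_div, sum_div, mul_div_assoc]

lemma ent_comp_equiv {α β : Type*} [Fintype α] [Fintype β] (e : α ≃ β) (q : β → ℝ) :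
    ent (q ∘ e) = ent q := by
  simp only [ent, Function.comp_apply, e.sum_comp fun b => q b * logb 2 (q b)]

lemma ent_mul_channel {C V : Type*} [Fintype C] [Fintype V] (s : C → ℝ) (m : C → V → ℝ)
    (hm1 : ∀ c, ∑ v, m c v = 1) :
    ent (fun t : V × C => s t.2 * m t.2 t.1) = ent s + ∑ c, s c * ent (m c) := by
  have hc : ∀ c, ∑ v, negMulLog (s c * m c v) =
      negMulLog (s c) + s c * ∑ v, negMulLog (m c v) := by
    intro c
    simp only [negMulLog_mul, sum_add_distrib, ← sum_mul, hm1, one_mul, ← mul_sum]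
  simp only [ent_eq_sum_negMulLog_div, Fintype.sum_prod_type]
  rw [sum_comm, sum_congr rfl fun c _ => hc c, sum_add_distrib, add_div, sum_div _ (fun c => _ * _)]
  simp only [mul_div_assoc]

lemma mul_log_add_log_sub_log_sub_log_le {x y z w : ℝ} (hx : 0 ≤ x) (hy : x ≤ y) (hz : x ≤ z)
    (hw : x ≤ w) : x * (log y + log z - log x - log w) ≤ y * z / w - x := by
  rcases hx.eq_or_lt with rfl | hx
  · simpa using div_nonneg (mul_nonneg hy hz) hw
  have hy' : 0 < y := hx.trans_le hy
  have hz' : 0 < z := hx.trans_le hz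
  have hw' : 0 < w := hx.trans_le hw
  have hlog : log y + log z - log x - log w = log (y * z / (x * w)) := by
    rw [log_div (by positivity) (by positivity), log_mul (by positivity) (by positivity),
      log_mul hx.ne' hw'.ne']
    ring
  calc x * (log y + log z - log x - log w) ≤ x * (y * z / (x * w) - 1) := by
        rw [hlog]; gcongr; exact log_le_sub_one_of_pos (by positivity)
    _ = y * z / w - x := by field_simp

-- `H(A,B) ≤ H(A) + H(B)` for a mass function `s` that need not be normalised.
lemma sum_negMulLog_add_negMulLog_sum_le {A B : Type*} [Fintype A] [Fintype B] (s : A → B → ℝ)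
    (hs : ∀ a b, 0 ≤ s a b) :
    ∑ a, ∑ b, negMulLog (s a b) + negMulLog (∑ a, ∑ b, s a b) ≤
      ∑ a, negMulLog (∑ b, s a b) + ∑ b, negMulLog (∑ a, s a b) := by
  set sA : A → ℝ := fun a => ∑ b, s a b
  set sB : B → ℝ := fun b => ∑ a, s a b
  set T := ∑ a, ∑ b, s a b
  have hsA : ∀ a b, s a b ≤ sA a := fun a b => single_le_sum (fun b _ => hs a b) (mem_univ b)
  have hsB : ∀ a b, s a b ≤ sB b := fun a b => single_le_sum (fun a _ => hs a b) (mem_univ a)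
  have hT : ∀ a b, s a b ≤ T := fun a b =>
    (hsA a b).trans (single_le_sum (fun a _ => sum_nonneg fun b _ => hs a b) (mem_univ a))
  have key : ∑ a, ∑ b, s a b * (log (sA a) + log (sB b) - log (s a b) - log T) ≤ 0 :=
    calc _ ≤ ∑ a, ∑ b, (sA a * sB b / T - s a b) :=
          sum_le_sum fun a _ => sum_le_sum fun b _ =>
            mul_log_add_log_sub_log_sub_log_le (hs a b) (hsA a b) (hsB a b) (hT a b)
      _ = T * T / T - T := by
          have hsumB : ∑ b, sB b = T := sum_comm
          simp only [sum_sub_distrib, ← sum_div, ← sum_mul_sum, hsumB]; rfl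
      _ = 0 := by rw [mul_self_div_self, sub_self]
  have hA : ∑ a, sA a * log (sA a) = ∑ a, ∑ b, s a b * log (sA a) := by simp only [sA, sum_mul]
  have hB : ∑ b, sB b * log (sB b) = ∑ a, ∑ b, s a b * log (sB b) := by
    simp only [sB, sum_mul]; exact sum_comm
  have hT : T * log T = ∑ a, ∑ b, s a b * log T := by simp only [T, sum_mul]
  simp only [negMulLog, neg_mul, sum_neg_distrib, mul_add, mul_sub, sum_add_distrib,
    sum_sub_distrib] at key ⊢
  linarith

noncomputable def condMutualInfo {A B C : Type*} [Fintype A] [Fintype B] [Fintype C]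
    (r : A × B × C → ℝ) : ℝ :=
  ent (fun t : A × C => ∑ b, r (t.1, b, t.2)) + ent (fun t : B × C => ∑ a, r (a, t.1, t.2))
    - ent r - ent (fun c => ∑ a, ∑ b, r (a, b, c))

lemma condMutualInfo_nonneg {A B C : Type*} [Fintype A] [Fintype B] [Fintype C]
    (r : A × B × C → ℝ) (hr : ∀ t, 0 ≤ r t) : 0 ≤ condMutualInfo r := by
  have hslice : ∀ c, 0 ≤ ∑ a, negMulLog (∑ b, r (a, b, c)) + ∑ b, negMulLog (∑ a, r (a, b, c))
      - (∑ a, ∑ b, negMulLog (r (a, b, c)) + negMulLog (∑ a, ∑ b, r (a, b, c))) := fun c =>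
    sub_nonneg.2 (sum_negMulLog_add_negMulLog_sum_le (fun a b => r (a, b, c)) fun _ _ => hr _)
  have hsplit : condMutualInfo r = (∑ c, (∑ a, negMulLog (∑ b, r (a, b, c))
      + ∑ b, negMulLog (∑ a, r (a, b, c))
      - (∑ a, ∑ b, negMulLog (r (a, b, c)) + negMulLog (∑ a, ∑ b, r (a, b, c))))) / log 2 := by
    have hjoint : ∑ c, ∑ b, ∑ a, negMulLog (r (a, b, c)) = ∑ c, ∑ a, ∑ b, negMulLog (r (a, b, c)) :=
      sum_congr rfl fun _ _ => sum_comm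
    simp only [condMutualInfo, ent_eq_sum_negMulLog_div, Fintype.sum_prod_type_right, hjoint,
      sum_add_distrib, sum_sub_distrib]
    ring
  rw [hsplit]
  exact div_nonneg (sum_nonneg fun c _ => hslice c) (log_nonneg one_le_two)

-- `H(V|Y) ≤ H(V|W)` when `V` depends on `(Y, W)` only through `Y`: then `H(V|Y,W) = H(V|Y)`, and
-- the gap is `I(V;Y|W) ≥ 0`.
lemma ent_sub_ent_le_of_markov {V Y W : Type*} [Fintype V] [Fintype Y] [Fintype W]
    (J : Y × W → ℝ) (m : Y → V → ℝ) (hJ : ∀ t, 0 ≤ J t) (hm : ∀ y v, 0 ≤ m y v)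
    (hm1 : ∀ y, ∑ v, m y v = 1) :
    ent (fun t : V × Y => (∑ w, J (t.2, w)) * m t.2 t.1) - ent (fun y => ∑ w, J (y, w)) ≤
      ent (fun t : V × W => ∑ y, J (y, t.2) * m y t.1) - ent (fun w => ∑ y, J (y, w)) := by
  have hI := condMutualInfo_nonneg (fun t : V × Y × W => J t.2 * m t.2.1 t.1)
    fun t => mul_nonneg (hJ _) (hm _ _)
  have hYW : (fun t : Y × W => ∑ v, J t * m t.1 v) = J := by
    funext t; rw [← mul_sum, hm1, mul_one]
  have hW : (fun w => ∑ v, ∑ y, J (y, w) * m y v) = fun w => ∑ y, J (y, w) := by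
    funext w; rw [sum_comm]; simp only [← mul_sum, hm1, mul_one]
  have hweights : ∑ c : Y × W, J c * ent (m c.1) = ∑ y, (∑ w, J (y, w)) * ent (m y) := by
    simp only [Fintype.sum_prod_type, sum_mul]
  unfold condMutualInfo at hI
  dsimp only at hI
  rw [hYW, hW, ent_mul_channel J (fun c => m c.1) fun c => hm1 c.1, hweights] at hI
  rw [ent_mul_channel (fun y => ∑ w, J (y, w)) m hm1]
  linarith

lemma ent_sub_ent_le_of_factorization {U X Y1 Y2 V : Type*} [Fintype U] [Fintype X] [Fintype Y1]
    [Fintype Y2] [Fintype V] (p : U × X × Y1 × Y2 × V → ℝ) (q1 : U × X → ℝ) (k : X → Y1 × Y2 → ℝ)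
    (m : Y2 → V → ℝ) (hq1 : ∀ z, 0 ≤ q1 z) (hk : ∀ x y, 0 ≤ k x y) (hm : ∀ y v, 0 ≤ m y v)
    (hm1 : ∀ y, ∑ v, m y v = 1)
    (hfac : ∀ u x y1 y2 v, p (u, x, y1, y2, v) = q1 (u, x) * k x (y1, y2) * m y2 v) :
    ent (fun t : V × Y2 => ∑ u, ∑ x, ∑ y1, p (u, x, y1, t.2, t.1))
        - ent (fun y2 => ∑ u, ∑ x, ∑ y1, ∑ v, p (u, x, y1, y2, v)) ≤
      ent (fun t : U × V × Y1 => ∑ x, ∑ y2, p (t.1, x, t.2.2, y2, t.2.1))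
        - ent (fun t : U × Y1 => ∑ x, ∑ y2, ∑ v, p (t.1, x, t.2, y2, v)) := by
  have hmarg : ∀ u x y1 y2, ∑ v, p (u, x, y1, y2, v) = q1 (u, x) * k x (y1, y2) := by
    intro u x y1 y2
    simp only [hfac, ← mul_sum, hm1, mul_one]
  have h := ent_sub_ent_le_of_markov (fun t : Y2 × U × Y1 => ∑ x, q1 (t.2.1, x) * k x (t.2.2, t.1))
    m (fun _ => sum_nonneg fun _ _ => mul_nonneg (hq1 _) (hk _ _)) hm hm1
  have hVY2 : (fun t : V × Y2 => ∑ u, ∑ x, ∑ y1, p (u, x, y1, t.2, t.1)) =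
      fun t => (∑ w : U × Y1, ∑ x, q1 (w.1, x) * k x (w.2, t.2)) * m t.2 t.1 := by
    funext t
    simp only [hfac, Fintype.sum_prod_type, sum_mul]
    exact sum_congr rfl fun _ _ => sum_comm
  have hY2 : (fun y2 => ∑ u, ∑ x, ∑ y1, ∑ v, p (u, x, y1, y2, v)) =
      fun y2 => ∑ w : U × Y1, ∑ x, q1 (w.1, x) * k x (w.2, y2) := by
    funext y2
    simp only [hmarg, Fintype.sum_prod_type]
    exact sum_congr rfl fun _ _ => sum_comm
  have hUVY1 : (fun t : V × U × Y1 => ∑ y2, (∑ x, q1 (t.2.1, x) * k x (t.2.2, y2)) * m y2 t.1) =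
      (fun t : U × V × Y1 => ∑ x, ∑ y2, p (t.1, x, t.2.2, y2, t.2.1)) ∘
        (⟨fun t => (t.2.1, t.1, t.2.2), fun t => (t.2.1, t.1, t.2.2), fun _ => rfl, fun _ => rfl⟩ :
          V × U × Y1 ≃ U × V × Y1) := by
    funext t
    simp only [Function.comp_apply, Equiv.coe_fn_mk, hfac, sum_mul]
    exact sum_comm
  have hUY1 : (fun t : U × Y1 => ∑ x, ∑ y2, ∑ v, p (t.1, x, t.2, y2, v)) =
      fun t => ∑ y2, ∑ x, q1 (t.1, x) * k x (t.2, y2) := by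
    funext t
    simp only [hmarg]
    exact sum_comm
  dsimp only at h
  rw [hUVY1, ent_comp_equiv] at h
  rwa [hVY2, hY2, hUY1]

theorem stmt5_general {U X Y1 Y2 V : Type*}
    [Fintype U] [Fintype X] [Fintype Y1] [Fintype Y2] [Fintype V]
    (p : U × X × Y1 × Y2 × V → ℝ)
    (q1 : U × X → ℝ) (k : X → Y1 × Y2 → ℝ) (m : Y2 → V → ℝ)
    (hq1 : ∀ z, 0 ≤ q1 z)
    (hk : ∀ x y, 0 ≤ k x y)
    (hm : ∀ y v, 0 ≤ m y v) (hm1 : ∀ y, ∑ v, m y v = 1)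
    (hfac : ∀ u x y1 y2 v,
      p (u, x, y1, y2, v) = q1 (u, x) * k x (y1, y2) * m y2 v)
    (hent : -- H(Û|Y1) = H(Û|Y2)
      (ent (fun t : V × Y1 => ∑ u, ∑ x, ∑ y2, p (u, x, t.2, y2, t.1))
        - ent (fun y1 => ∑ u, ∑ x, ∑ y2, ∑ v, p (u, x, y1, y2, v)))
      =
      (ent (fun t : V × Y2 => ∑ u, ∑ x, ∑ y1, p (u, x, y1, t.2, t.1))
        - ent (fun y2 => ∑ u, ∑ x, ∑ y1, ∑ v, p (u, x, y1, y2, v)))) :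
    -- I(U; Û | Y1) = H(U,Y1) + H(Û,Y1) - H(U,Û,Y1) - H(Y1) = 0
    (ent (fun t : U × Y1 => ∑ x, ∑ y2, ∑ v, p (t.1, x, t.2, y2, v))
      + ent (fun t : V × Y1 => ∑ u, ∑ x, ∑ y2, p (u, x, t.2, y2, t.1))
      - ent (fun t : U × V × Y1 => ∑ x, ∑ y2, p (t.1, x, t.2.2, y2, t.2.1))
      - ent (fun y1 => ∑ u, ∑ x, ∑ y2, ∑ v, p (u, x, y1, y2, v))) = 0 := by
  have hp : ∀ z, 0 ≤ p z := by
    rintro ⟨u, x, y1, y2, v⟩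
    rw [hfac]
    exact mul_nonneg (mul_nonneg (hq1 _) (hk _ _)) (hm _ _)
  have hI := condMutualInfo_nonneg (fun t : U × V × Y1 => ∑ x, ∑ y2, p (t.1, x, t.2.2, y2, t.2.1))
    fun _ => sum_nonneg fun _ _ => sum_nonneg fun _ _ => hp _
  have hUY1 : (fun t : U × Y1 => ∑ v, ∑ x, ∑ y2, p (t.1, x, t.2, y2, v)) =
      fun t => ∑ x, ∑ y2, ∑ v, p (t.1, x, t.2, y2, v) := by
    funext t
    exact sum_comm.trans (sum_congr rfl fun _ _ => sum_comm)
  have hY1 : (fun y1 => ∑ u, ∑ v, ∑ x, ∑ y2, p (u, x, y1, y2, v)) =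
      fun y1 => ∑ u, ∑ x, ∑ y2, ∑ v, p (u, x, y1, y2, v) := by
    funext y1
    exact sum_congr rfl fun _ _ => sum_comm.trans (sum_congr rfl fun _ _ => sum_comm)
  unfold condMutualInfo at hI
  rw [hUY1, hY1] at hI
  have hmarkov := ent_sub_ent_le_of_factorization p q1 k m hq1 hk hm hm1 hfac
  linarith

/-- If the joint distribution factors as `p(u,x) p(y1,y2|x) p(û|y2)` and
`H(Û|Y1) = H(Û|Y2)`, then `I(U; Û | Y1) = 0`. -/
theorem stmt5 {U X Y1 Y2 V : Type*}
    [Fintype U] [Fintype X] [Fintype Y1] [Fintype Y2] [Fintype V]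
    (p : U × X × Y1 × Y2 × V → ℝ)
    (q1 : U × X → ℝ) (k : X → Y1 × Y2 → ℝ) (m : Y2 → V → ℝ)
    (hq1 : ∀ z, 0 ≤ q1 z) (hq11 : ∑ z, q1 z = 1)
    (hk : ∀ x y, 0 ≤ k x y) (hk1 : ∀ x, ∑ y, k x y = 1)
    (hm : ∀ y v, 0 ≤ m y v) (hm1 : ∀ y, ∑ v, m y v = 1)
    (hfac : ∀ u x y1 y2 v,
      p (u, x, y1, y2, v) = q1 (u, x) * k x (y1, y2) * m y2 v)
    (hent : -- H(Û|Y1) = H(Û|Y2)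
      (ent (fun t : V × Y1 => ∑ u, ∑ x, ∑ y2, p (u, x, t.2, y2, t.1))
        - ent (fun y1 => ∑ u, ∑ x, ∑ y2, ∑ v, p (u, x, y1, y2, v)))
      =
      (ent (fun t : V × Y2 => ∑ u, ∑ x, ∑ y1, p (u, x, y1, t.2, t.1))
        - ent (fun y2 => ∑ u, ∑ x, ∑ y1, ∑ v, p (u, x, y1, y2, v)))) :
    -- I(U; Û | Y1) = H(U,Y1) + H(Û,Y1) - H(U,Û,Y1) - H(Y1) = 0
    (ent (fun t : U × Y1 => ∑ x, ∑ y2, ∑ v, p (t.1, x, t.2, y2, v))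
      + ent (fun t : V × Y1 => ∑ u, ∑ x, ∑ y2, p (u, x, t.2, y2, t.1))
      - ent (fun t : U × V × Y1 => ∑ x, ∑ y2, p (t.1, x, t.2.2, y2, t.2.1))
      - ent (fun y1 => ∑ u, ∑ x, ∑ y2, ∑ v, p (u, x, y1, y2, v))) = 0 :=
  stmt5_general p q1 k m hq1 hk hm hm1 hfac hent
end

section
/- Let U, X, Y1, Y2, Û be discrete random variables on finite alphabets whose joint distribution factors as p(u,x) p(y1,y2|x) p(û|y2), and let C21 ≥ 0 be a real number with H(Û | Y1) ≤ C21 + H(Û | Y2). Then I(U; Y1, Û) ≤ I(U; Y1) + C21 − I(Û; Y2 | U, Y1). -/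
lemma ent_equiv {α β : Type*} [Fintype α] [Fintype β] (e : β ≃ α) (q : α → ℝ) :
    ent (fun b => q (e b)) = ent q := by
  unfold ent
  congr 1
  exact Fintype.sum_equiv e _ _ (fun b => rfl)

lemma mul_logb_mul (x y : ℝ) :
    x * y * Real.logb 2 (x * y) = x * y * Real.logb 2 x + x * y * Real.logb 2 y := by
  rcases eq_or_ne x 0 with hx | hx
  · simp [hx]
  rcases eq_or_ne y 0 with hy | hy
  · simp [hy]
  rw [Real.logb_mul hx hy]; ring

lemma condent {A B : Type*} [Fintype A] [Fintype B] (s : A → ℝ) (w : A → B → ℝ)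
    (hw1 : ∀ a, ∑ b, w a b = 1) :
    ent (fun t : B × A => s t.2 * w t.2 t.1) = ent s + ∑ a, s a * ent (w a) := by
  unfold ent
  rw [Fintype.sum_prod_type, Finset.sum_comm]
  have : ∀ a : A, ∑ b : B, s a * w a b * Real.logb 2 (s a * w a b)
      = s a * Real.logb 2 (s a) + s a * ∑ b : B, w a b * Real.logb 2 (w a b) := by
    intro a
    have : ∀ b : B, s a * w a b * Real.logb 2 (s a * w a b)
        = s a * Real.logb 2 (s a) * w a b + s a * (w a b * Real.logb 2 (w a b)) := by
      intro b
      rw [mul_logb_mul]; ring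
    rw [Finset.sum_congr rfl (fun b _ => this b), Finset.sum_add_distrib,
      ← Finset.mul_sum, ← Finset.mul_sum, hw1 a, mul_one]
  rw [Finset.sum_congr rfl (fun a _ => this a), Finset.sum_add_distrib]
  have h2 : ∀ a : A, s a * -∑ b : B, w a b * Real.logb 2 (w a b)
      = -(s a * ∑ b : B, w a b * Real.logb 2 (w a b)) := fun a => by ring
  rw [Finset.sum_congr rfl (fun a _ => h2 a), Finset.sum_neg_distrib]
  ring

/-- If the joint distribution factors as `p(u,x) p(y1,y2|x) p(û|y2)` and
`H(Û|Y1) ≤ C21 + H(Û|Y2)` for some `C21 ≥ 0`, then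
`I(U; Y1, Û) ≤ I(U; Y1) + C21 − I(Û; Y2 | U, Y1)`. -/
theorem stmt6 {U X Y1 Y2 V : Type*}
    [Fintype U] [Fintype X] [Fintype Y1] [Fintype Y2] [Fintype V]
    (p : U × X × Y1 × Y2 × V → ℝ)
    (q1 : U × X → ℝ) (k : X → Y1 × Y2 → ℝ) (m : Y2 → V → ℝ)
    (hq1 : ∀ z, 0 ≤ q1 z) (hq11 : ∑ z, q1 z = 1)
    (hk : ∀ x y, 0 ≤ k x y) (hk1 : ∀ x, ∑ y, k x y = 1)
    (hm : ∀ y v, 0 ≤ m y v) (hm1 : ∀ y, ∑ v, m y v = 1)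
    (hfac : ∀ u x y1 y2 v,
      p (u, x, y1, y2, v) = q1 (u, x) * k x (y1, y2) * m y2 v)
    (C21 : ℝ) (hC : 0 ≤ C21)
    (hent : -- H(Û|Y1) ≤ C21 + H(Û|Y2)
      (ent (fun t : V × Y1 => ∑ u, ∑ x, ∑ y2, p (u, x, t.2, y2, t.1))
        - ent (fun y1 => ∑ u, ∑ x, ∑ y2, ∑ v, p (u, x, y1, y2, v)))
      ≤ C21 +
      (ent (fun t : V × Y2 => ∑ u, ∑ x, ∑ y1, p (u, x, y1, t.2, t.1))
        - ent (fun y2 => ∑ u, ∑ x, ∑ y1, ∑ v, p (u, x, y1, y2, v)))) :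
    -- I(U; Y1, Û)
    (ent (fun u => ∑ x, ∑ y1, ∑ y2, ∑ v, p (u, x, y1, y2, v))
      + ent (fun t : Y1 × V => ∑ u, ∑ x, ∑ y2, p (u, x, t.1, y2, t.2))
      - ent (fun t : U × Y1 × V => ∑ x, ∑ y2, p (t.1, x, t.2.1, y2, t.2.2)))
    ≤
    -- I(U; Y1) + C21 − I(Û; Y2 | U, Y1)
    (ent (fun u => ∑ x, ∑ y1, ∑ y2, ∑ v, p (u, x, y1, y2, v))
      + ent (fun y1 => ∑ u, ∑ x, ∑ y2, ∑ v, p (u, x, y1, y2, v))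
      - ent (fun t : U × Y1 => ∑ x, ∑ y2, ∑ v, p (t.1, x, t.2, y2, v)))
    + C21
    - (ent (fun t : V × U × Y1 => ∑ x, ∑ y2, p (t.2.1, x, t.2.2, y2, t.1))
      + ent (fun t : Y2 × U × Y1 => ∑ x, ∑ v, p (t.2.1, x, t.2.2, t.1, v))
      - ent (fun t : V × Y2 × U × Y1 => ∑ x, p (t.2.2.1, x, t.2.2.2, t.2.1, t.1))
      - ent (fun t : U × Y1 => ∑ x, ∑ y2, ∑ v, p (t.1, x, t.2, y2, v))) := by
  -- permutation identities
  have hE4 : ent (fun t : U × Y1 × V => ∑ x, ∑ y2, p (t.1, x, t.2.1, y2, t.2.2))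
      = ent (fun t : V × U × Y1 => ∑ x, ∑ y2, p (t.2.1, x, t.2.2, y2, t.1)) := by
    rw [← ent_equiv (⟨fun t : U × Y1 × V => (t.2.2, t.1, t.2.1),
      fun t : V × U × Y1 => (t.2.1, t.2.2, t.1), fun t => rfl, fun t => rfl⟩)
      (fun t : V × U × Y1 => ∑ x, ∑ y2, p (t.2.1, x, t.2.2, y2, t.1))]
    rfl
  have hE3 : ent (fun t : Y1 × V => ∑ u, ∑ x, ∑ y2, p (u, x, t.1, y2, t.2))
      = ent (fun t : V × Y1 => ∑ u, ∑ x, ∑ y2, p (u, x, t.2, y2, t.1)) := by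
    rw [← ent_equiv (Equiv.prodComm Y1 V)
      (fun t : V × Y1 => ∑ u, ∑ x, ∑ y2, p (u, x, t.2, y2, t.1))]
    rfl
  -- Markov identity
  set s2 : Y2 → ℝ := fun y2 => ∑ u, ∑ x, ∑ y1, q1 (u, x) * k x (y1, y2) with hs2
  set s3 : Y2 × U × Y1 → ℝ := fun a => ∑ x, q1 (a.2.1, x) * k x (a.2.2, a.1) with hs3
  have h1 : ent (fun t : V × Y2 => ∑ u, ∑ x, ∑ y1, p (u, x, y1, t.2, t.1))
      = ent (fun y2 => ∑ u, ∑ x, ∑ y1, ∑ v, p (u, x, y1, y2, v))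
        + ∑ y2, s2 y2 * ent (m y2) := by
    have e1 : (fun t : V × Y2 => ∑ u, ∑ x, ∑ y1, p (u, x, y1, t.2, t.1))
        = fun t : V × Y2 => s2 t.2 * m t.2 t.1 := by
      funext t
      simp only [hs2, hfac, Finset.sum_mul]
    have e2 : (fun y2 : Y2 => ∑ u, ∑ x, ∑ y1, ∑ v, p (u, x, y1, y2, v)) = s2 := by
      funext y2
      simp only [hs2, hfac, ← Finset.mul_sum, hm1, mul_one]
    rw [e1, e2, condent s2 m hm1]
  have h2 : ent (fun t : V × Y2 × U × Y1 => ∑ x, p (t.2.2.1, x, t.2.2.2, t.2.1, t.1))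
      = ent (fun t : Y2 × U × Y1 => ∑ x, ∑ v, p (t.2.1, x, t.2.2, t.1, v))
        + ∑ y2, s2 y2 * ent (m y2) := by
    have e1 : (fun t : V × Y2 × U × Y1 => ∑ x, p (t.2.2.1, x, t.2.2.2, t.2.1, t.1))
        = fun t : V × (Y2 × U × Y1) => s3 t.2 * m t.2.1 t.1 := by
      funext t
      simp only [hs3, hfac, Finset.sum_mul]
    have e2 : (fun t : Y2 × U × Y1 => ∑ x, ∑ v, p (t.2.1, x, t.2.2, t.1, v)) = s3 := by
      funext t
      simp only [hs3, hfac, ← Finset.mul_sum, hm1, mul_one]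
    rw [e1, e2, condent s3 (fun a => m a.1) (fun a => hm1 a.1)]
    congr 1
    rw [Fintype.sum_prod_type]
    congr 1
    funext y2
    rw [Fintype.sum_prod_type]
    have hs : s2 y2 = ∑ u, ∑ y1, s3 (y2, u, y1) := by
      simp only [hs2, hs3]
      exact Finset.sum_congr rfl (fun u _ => Finset.sum_comm)
    rw [hs, Finset.sum_mul]
    refine Finset.sum_congr rfl (fun u _ => ?_)
    rw [Finset.sum_mul]
  rw [hE4, hE3]
  linarith [hent, h1, h2]
end

section
/- Let W2 be a discrete random variable and Y1^{k-1}, Y2^{k-1}, Y1k, Y2k discrete random variables on finite alphabets such that (i) Y2k is conditionally independent of (W2, Y1^{k-1}, Y2^{k-1}) given (Y1k) together with the channel memorylessness and physical degradedness assumptions, so that I(W2; Y2k | Y1^{k-1}, Y2^{k-1}, Y1k) = 0, and (ii) Y1k is conditionally independent of Y2^{k-1} given (Y1^{k-1}, W2). Then I(W2; Y1k, Y2k | Y1^{k-1}, Y2^{k-1}) ≤ I(Uk; Y1k), where Uk := (Y1^{k-1}, W2). -/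
open Finset Real

lemma ent_reindex {α β : Type*} [Fintype α] [Fintype β] (e : α ≃ β)
    (f : α → ℝ) (g : β → ℝ) (h : ∀ a, f a = g (e a)) : ent f = ent g := by
  unfold ent
  congr 1
  exact Fintype.sum_equiv e _ _ (fun a => by rw [h])


lemma ent_subadd {α β : Type*} [Fintype α] [Fintype β] (q : α × β → ℝ)
    (hnn : ∀ z, 0 ≤ q z) (hsum : ∑ z, q z = 1) :
    ent q ≤ ent (fun a => ∑ b, q (a, b)) + ent (fun b => ∑ a, q (a, b)) := by
  set qA : α → ℝ := fun a => ∑ b, q (a, b) with hqA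
  set qB : β → ℝ := fun b => ∑ a, q (a, b) with hqB
  have hqAnn : ∀ a, 0 ≤ qA a := fun a => Finset.sum_nonneg fun b _ => hnn _
  have hqBnn : ∀ b, 0 ≤ qB b := fun b => Finset.sum_nonneg fun a _ => hnn _
  have hAsum : ∑ a, qA a = 1 := by rw [← hsum, Fintype.sum_prod_type]
  have hBsum : ∑ b, qB b = 1 := by
    rw [← hsum, Fintype.sum_prod_type, Finset.sum_comm]
  have hle : ∀ a b, q (a, b) ≤ qA a := fun a b =>
    Finset.single_le_sum (f := fun b => q (a, b)) (fun i _ => hnn _) (mem_univ b)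
  have hle' : ∀ a b, q (a, b) ≤ qB b := fun a b =>
    Finset.single_le_sum (f := fun a => q (a, b)) (fun i _ => hnn _) (mem_univ a)
  -- Step 1: RHS as a double sum
  have step1 : ent qA + ent qB
      = - ∑ z : α × β, q z * Real.logb 2 (qA z.1 * qB z.2) := by
    unfold ent
    rw [Fintype.sum_prod_type]
    have e1 : ∑ a, qA a * Real.logb 2 (qA a)
        = ∑ a, ∑ b, q (a, b) * Real.logb 2 (qA a) := by
      refine Finset.sum_congr rfl fun a _ => ?_
      rw [hqA]; rw [Finset.sum_mul]
    have e2 : ∑ b, qB b * Real.logb 2 (qB b)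
        = ∑ a, ∑ b, q (a, b) * Real.logb 2 (qB b) := by
      rw [Finset.sum_comm]
      refine Finset.sum_congr rfl fun b _ => ?_
      rw [hqB]; rw [Finset.sum_mul]
    rw [e1, e2]
    have key : ∀ a b, q (a, b) * Real.logb 2 (qA a * qB b)
        = q (a, b) * Real.logb 2 (qA a) + q (a, b) * Real.logb 2 (qB b) := by
      intro a b
      rcases eq_or_lt_of_le (hnn (a, b)) with h0 | hpos
      · simp [← h0]
      · have hA : qA a ≠ 0 := ne_of_gt (lt_of_lt_of_le hpos (hle a b))
        have hB : qB b ≠ 0 := ne_of_gt (lt_of_lt_of_le hpos (hle' a b))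
        rw [Real.logb_mul hA hB, mul_add]
    rw [← neg_add]
    congr 1
    rw [← Finset.sum_add_distrib]
    refine Finset.sum_congr rfl fun a _ => ?_
    rw [← Finset.sum_add_distrib]
    exact Finset.sum_congr rfl fun b _ => (key a b).symm
  rw [step1]
  unfold ent
  rw [neg_le_neg_iff]
  -- ∑ q log r ≤ ∑ q log q, i.e. ∑ (q log r - q log q) ≤ 0
  rw [← sub_nonneg, ← Finset.sum_sub_distrib]
  rw [← neg_nonpos, ← Finset.sum_neg_distrib]
  have hlog2 : (0:ℝ) < Real.log 2 := Real.log_pos (by norm_num)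
  have termbd : ∀ z : α × β,
      -(q z * Real.logb 2 (q z) - q z * Real.logb 2 (qA z.1 * qB z.2))
      ≤ (qA z.1 * qB z.2 - q z) / Real.log 2 := by
    intro z
    rcases eq_or_lt_of_le (hnn z) with h0 | hpos
    · rw [← h0]
      simp only [zero_mul, sub_zero, neg_zero, zero_sub, sub_zero]
      have h1 : 0 ≤ qA z.1 * qB z.2 := mul_nonneg (hqAnn _) (hqBnn _)
      exact div_nonneg (by linarith) hlog2.le
    · have hA : 0 < qA z.1 := lt_of_lt_of_le hpos (by rw [← Prod.mk.eta (p := z)]; exact hle z.1 z.2)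
      have hB : 0 < qB z.2 := lt_of_lt_of_le hpos (by rw [← Prod.mk.eta (p := z)]; exact hle' z.1 z.2)
      have hr : 0 < qA z.1 * qB z.2 := mul_pos hA hB
      have : -(q z * Real.logb 2 (q z) - q z * Real.logb 2 (qA z.1 * qB z.2))
          = q z * Real.logb 2 (qA z.1 * qB z.2 / q z) := by
        rw [Real.logb_div (ne_of_gt hr) (ne_of_gt hpos)]; ring
      rw [this]
      have hlr : Real.log (qA z.1 * qB z.2 / q z) ≤ qA z.1 * qB z.2 / q z - 1 :=
        Real.log_le_sub_one_of_pos (div_pos hr hpos)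
      have : q z * Real.logb 2 (qA z.1 * qB z.2 / q z)
          = q z * Real.log (qA z.1 * qB z.2 / q z) / Real.log 2 := by
        rw [Real.logb]; ring
      rw [this, div_le_div_iff_of_pos_right hlog2]
      calc q z * Real.log (qA z.1 * qB z.2 / q z)
          ≤ q z * (qA z.1 * qB z.2 / q z - 1) := by
            exact mul_le_mul_of_nonneg_left hlr (le_of_lt hpos)
        _ = qA z.1 * qB z.2 - q z := by field_simp
  calc ∑ z : α × β, -(q z * Real.logb 2 (q z) - q z * Real.logb 2 (qA z.1 * qB z.2))
      ≤ ∑ z : α × β, (qA z.1 * qB z.2 - q z) / Real.log 2 :=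
        Finset.sum_le_sum fun z _ => termbd z
    _ = ((∑ z : α × β, qA z.1 * qB z.2) - 1) / Real.log 2 := by
        rw [← Finset.sum_div, Finset.sum_sub_distrib, hsum]
    _ = 0 := by
        rw [Fintype.sum_prod_type]
        simp only [← Finset.mul_sum, hBsum, mul_one]
        rw [hAsum]; norm_num
lemma ci_ent {W A B C : Type*} [Fintype W] [Fintype A] [Fintype B] [Fintype C]
    (q : W × A × B × C → ℝ) (hnn : ∀ z, 0 ≤ q z)
    (h : ∀ w a b c,
      q (w, a, b, c) * (∑ b', ∑ c', q (w, a, b', c'))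
      = (∑ b', q (w, a, b', c)) * (∑ c', q (w, a, b, c'))) :
    ent q + ent (fun t : W × A => ∑ b, ∑ c, q (t.1, t.2, b, c))
    = ent (fun t : W × A × C => ∑ b, q (t.1, t.2.1, b, t.2.2))
      + ent (fun t : W × A × B => ∑ c, q (t.1, t.2.1, t.2.2, c)) := by
  set m2 : W × A → ℝ := fun t => ∑ b, ∑ c, q (t.1, t.2, b, c) with hm2
  set m3c : W × A × C → ℝ := fun t => ∑ b, q (t.1, t.2.1, b, t.2.2) with hm3c
  set m3b : W × A × B → ℝ := fun t => ∑ c, q (t.1, t.2.1, t.2.2, c) with hm3b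
  have E0 : ent q = - ∑ w, ∑ a, ∑ b, ∑ c, q (w, a, b, c) * Real.logb 2 (q (w, a, b, c)) := by
    unfold ent
    rw [Fintype.sum_prod_type]
    congr 1
    refine Finset.sum_congr rfl fun w _ => ?_
    rw [Fintype.sum_prod_type]
    refine Finset.sum_congr rfl fun a _ => ?_
    rw [Fintype.sum_prod_type]
  have E2 : ent m2 = - ∑ w, ∑ a, ∑ b, ∑ c, q (w, a, b, c) * Real.logb 2 (m2 (w, a)) := by
    unfold ent
    rw [Fintype.sum_prod_type]
    congr 1
    refine Finset.sum_congr rfl fun w _ => Finset.sum_congr rfl fun a _ => ?_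
    rw [hm2, Finset.sum_mul]
    exact Finset.sum_congr rfl fun b _ => Finset.sum_mul ..
  have E3c : ent m3c = - ∑ w, ∑ a, ∑ b, ∑ c, q (w, a, b, c) * Real.logb 2 (m3c (w, a, c)) := by
    unfold ent
    rw [Fintype.sum_prod_type]
    congr 1
    refine Finset.sum_congr rfl fun w _ => ?_
    rw [Fintype.sum_prod_type]
    refine Finset.sum_congr rfl fun a _ => ?_
    have : ∑ c, m3c (w, a, c) * Real.logb 2 (m3c (w, a, c))
        = ∑ c, ∑ b, q (w, a, b, c) * Real.logb 2 (m3c (w, a, c)) :=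
      Finset.sum_congr rfl fun c _ => Finset.sum_mul ..
    rw [this, Finset.sum_comm]
  have E3b : ent m3b = - ∑ w, ∑ a, ∑ b, ∑ c, q (w, a, b, c) * Real.logb 2 (m3b (w, a, b)) := by
    unfold ent
    rw [Fintype.sum_prod_type]
    congr 1
    refine Finset.sum_congr rfl fun w _ => ?_
    rw [Fintype.sum_prod_type]
    refine Finset.sum_congr rfl fun a _ => Finset.sum_congr rfl fun b _ => Finset.sum_mul ..
  have key : ∀ w a b c,
      q (w, a, b, c) * Real.logb 2 (q (w, a, b, c)) + q (w, a, b, c) * Real.logb 2 (m2 (w, a))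
      = q (w, a, b, c) * Real.logb 2 (m3c (w, a, c))
        + q (w, a, b, c) * Real.logb 2 (m3b (w, a, b)) := by
    intro w a b c
    rcases eq_or_lt_of_le (hnn (w, a, b, c)) with h0 | hpos
    · simp [← h0]
    · have hc : q (w, a, b, c) ≤ m3b (w, a, b) :=
        Finset.single_le_sum (f := fun c => q (w, a, b, c)) (fun i _ => hnn _) (mem_univ c)
      have hb : q (w, a, b, c) ≤ m3c (w, a, c) :=
        Finset.single_le_sum (f := fun b => q (w, a, b, c)) (fun i _ => hnn _) (mem_univ b)
      have h2' : m3b (w, a, b) ≤ m2 (w, a) :=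
        Finset.single_le_sum (f := fun b => ∑ c, q (w, a, b, c))
          (fun i _ => Finset.sum_nonneg fun c _ => hnn _) (mem_univ b)
      have hq0 : q (w, a, b, c) ≠ 0 := ne_of_gt hpos
      have hm2p : m2 (w, a) ≠ 0 := ne_of_gt (lt_of_lt_of_le hpos (le_trans hc h2'))
      have hm3cp : m3c (w, a, c) ≠ 0 := ne_of_gt (lt_of_lt_of_le hpos hb)
      have hm3bp : m3b (w, a, b) ≠ 0 := ne_of_gt (lt_of_lt_of_le hpos hc)
      have hh : q (w, a, b, c) * m2 (w, a) = m3c (w, a, c) * m3b (w, a, b) := h w a b c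
      have hlog : Real.logb 2 (q (w, a, b, c) * m2 (w, a))
          = Real.logb 2 (m3c (w, a, c) * m3b (w, a, b)) := by rw [hh]
      rw [Real.logb_mul hq0 hm2p, Real.logb_mul hm3cp hm3bp] at hlog
      rw [← mul_add, ← mul_add, hlog]
  rw [E0, E2, E3c, E3b, ← neg_add, ← neg_add]
  congr 1
  simp only [← Finset.sum_add_distrib]
  exact Finset.sum_congr rfl fun w _ => Finset.sum_congr rfl fun a _ =>
    Finset.sum_congr rfl fun b _ => Finset.sum_congr rfl fun c _ => key w a b c
/-- Converse step: with `W = W2`, `A = Y1^{k-1}`, `B = Y2^{k-1}`, `C = Y1k`,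
`D = Y2k`, if (i) `I(W2; Y2k | Y1^{k-1}, Y2^{k-1}, Y1k) = 0` and (ii) `Y1k` is
conditionally independent of `Y2^{k-1}` given `(Y1^{k-1}, W2)`, then
`I(W2; Y1k, Y2k | Y1^{k-1}, Y2^{k-1}) ≤ I(Uk; Y1k)` where `Uk = (Y1^{k-1}, W2)`. -/
theorem stmt16 {W A B C D : Type*}
    [Fintype W] [Fintype A] [Fintype B] [Fintype C] [Fintype D]
    (p : W × A × B × C × D → ℝ)
    (hnn : ∀ z, 0 ≤ p z) (hsum : ∑ z, p z = 1)
    (h1 : -- I(W; D | A, B, C) = 0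
      ent (fun t : W × A × B × C => ∑ d, p (t.1, t.2.1, t.2.2.1, t.2.2.2, d))
        + ent (fun t : D × A × B × C => ∑ w, p (w, t.2.1, t.2.2.1, t.2.2.2, t.1))
        - ent p
        - ent (fun t : A × B × C => ∑ w, ∑ d, p (w, t.1, t.2.1, t.2.2, d)) = 0)
    (h2 : -- C ⫫ B | (A, W)
      ∀ w a b c,
        (∑ d, p (w, a, b, c, d)) * (∑ b', ∑ c', ∑ d, p (w, a, b', c', d))
        = (∑ b', ∑ d, p (w, a, b', c, d)) * (∑ c', ∑ d, p (w, a, b, c', d))) :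
    -- I(W; C, D | A, B)
    (ent (fun t : W × A × B => ∑ c, ∑ d, p (t.1, t.2.1, t.2.2, c, d))
      + ent (fun t : C × D × A × B => ∑ w, p (w, t.2.2.1, t.2.2.2, t.1, t.2.1))
      - ent p
      - ent (fun t : A × B => ∑ w, ∑ c, ∑ d, p (w, t.1, t.2, c, d)))
    ≤
    -- I(Uk; Y1k) = I((A, W); C)
    (ent (fun t : A × W => ∑ b, ∑ c, ∑ d, p (t.2, t.1, b, c, d))
      + ent (fun c => ∑ w, ∑ a, ∑ b, ∑ d, p (w, a, b, c, d))
      - ent (fun t : A × W × C => ∑ b, ∑ d, p (t.2.1, t.1, b, t.2.2, d))) := by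
  classical
  -- (1) conditional-independence entropy identity
  have ci' : ent (fun t : W × A × B × C => ∑ d, p (t.1, t.2.1, t.2.2.1, t.2.2.2, d))
      + ent (fun t : W × A => ∑ b, ∑ c, ∑ d, p (t.1, t.2, b, c, d))
      = ent (fun t : W × A × C => ∑ b, ∑ d, p (t.1, t.2.1, b, t.2.2, d))
      + ent (fun t : W × A × B => ∑ c, ∑ d, p (t.1, t.2.1, t.2.2, c, d)) :=
    ci_ent (fun t : W × A × B × C => ∑ d, p (t.1, t.2.1, t.2.2.1, t.2.2.2, d))
      (fun z => Finset.sum_nonneg fun d _ => hnn _) (fun w a b c => h2 w a b c)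
  -- (2) reindexing equalities
  have eA : ent (fun t : A × W => ∑ b, ∑ c, ∑ d, p (t.2, t.1, b, c, d))
      = ent (fun t : W × A => ∑ b, ∑ c, ∑ d, p (t.1, t.2, b, c, d)) :=
    ent_reindex (Equiv.prodComm A W) _ _ (fun t => rfl)
  have eC3 : ent (fun t : A × W × C => ∑ b, ∑ d, p (t.2.1, t.1, b, t.2.2, d))
      = ent (fun t : W × A × C => ∑ b, ∑ d, p (t.1, t.2.1, b, t.2.2, d)) :=
    ent_reindex ⟨fun t => (t.2.1, t.1, t.2.2), fun t => (t.2.1, t.1, t.2.2),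
      fun t => rfl, fun t => rfl⟩ _ _ (fun t => rfl)
  have eCD : ent (fun t : C × D × A × B => ∑ w, p (w, t.2.2.1, t.2.2.2, t.1, t.2.1))
      = ent (fun t : D × A × B × C => ∑ w, p (w, t.2.1, t.2.2.1, t.2.2.2, t.1)) :=
    ent_reindex ⟨fun t => (t.2.1, t.2.2.1, t.2.2.2, t.1),
      fun t => (t.2.2.2, t.1, t.2.1, t.2.2.1), fun t => rfl, fun t => rfl⟩ _ _ (fun t => rfl)
  -- (3) subadditivity : H(ABC) ≤ H(AB) + H(C)
  have hsum' : ∑ w, ∑ a, ∑ b, ∑ c, ∑ d, p (w, a, b, c, d) = 1 := by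
    rw [← hsum]; simp only [Fintype.sum_prod_type]
  have sum1 : (∑ t : (A × B) × C, ∑ w, ∑ d, p (w, t.1.1, t.1.2, t.2, d)) = 1 := by
    rw [← hsum']
    simp only [Fintype.sum_prod_type]
    calc ∑ a, ∑ b, ∑ c, ∑ w, ∑ d, p (w, a, b, c, d)
        = ∑ a, ∑ b, ∑ w, ∑ c, ∑ d, p (w, a, b, c, d) :=
          Finset.sum_congr rfl fun a _ => Finset.sum_congr rfl fun b _ => Finset.sum_comm
      _ = ∑ a, ∑ w, ∑ b, ∑ c, ∑ d, p (w, a, b, c, d) :=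
          Finset.sum_congr rfl fun a _ => Finset.sum_comm
      _ = ∑ w, ∑ a, ∑ b, ∑ c, ∑ d, p (w, a, b, c, d) := Finset.sum_comm
  have sub0 := ent_subadd (fun t : (A × B) × C => ∑ w, ∑ d, p (w, t.1.1, t.1.2, t.2, d))
    (fun z => Finset.sum_nonneg fun w _ => Finset.sum_nonneg fun d _ => hnn _) sum1
  have s0 : ent (fun t : (A × B) × C => ∑ w, ∑ d, p (w, t.1.1, t.1.2, t.2, d))
      = ent (fun t : A × B × C => ∑ w, ∑ d, p (w, t.1, t.2.1, t.2.2, d)) :=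
    ent_reindex (Equiv.prodAssoc A B C) _ _ (fun t => rfl)
  have s1 : ent (fun ab : A × B => ∑ c, ∑ w, ∑ d, p (w, ab.1, ab.2, c, d))
      = ent (fun t : A × B => ∑ w, ∑ c, ∑ d, p (w, t.1, t.2, c, d)) :=
    ent_reindex (Equiv.refl _) _ _ (fun t => Finset.sum_comm)
  have s2 : ent (fun c : C => ∑ ab : A × B, ∑ w, ∑ d, p (w, ab.1, ab.2, c, d))
      = ent (fun c => ∑ w, ∑ a, ∑ b, ∑ d, p (w, a, b, c, d)) := by
    refine ent_reindex (Equiv.refl _) _ _ (fun c => ?_)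
    rw [Fintype.sum_prod_type]
    calc ∑ a, ∑ b, ∑ w, ∑ d, p (w, a, b, c, d)
        = ∑ a, ∑ w, ∑ b, ∑ d, p (w, a, b, c, d) :=
          Finset.sum_congr rfl fun a _ => Finset.sum_comm
      _ = ∑ w, ∑ a, ∑ b, ∑ d, p (w, a, b, c, d) := Finset.sum_comm
  have sub' : ent (fun t : A × B × C => ∑ w, ∑ d, p (w, t.1, t.2.1, t.2.2, d))
      ≤ ent (fun t : A × B => ∑ w, ∑ c, ∑ d, p (w, t.1, t.2, c, d))
        + ent (fun c => ∑ w, ∑ a, ∑ b, ∑ d, p (w, a, b, c, d)) := by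
    rw [← s0, ← s1, ← s2]
    exact sub0
  linarith [h1, ci', sub', eA, eC3, eCD]
end
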